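/- arXiv:2212.04020 — 2 statements merged into one kernel-verified Lean document; each statement's English description precedes it below -/
import Mathlib

section
/- Fredholm alternative with a positive solution for conservative Q-matrices: let Q be a conservative Q-matrix on S = {1,…,N} with rank N − 1, let π ∈ ℝ^N be a row vector with π_i > 0 for all i and πQ = 0, and let β ∈ ℝ^N satisfy Σ_{i=1}^N π_i β_i < 0. Then there exist a real c > 0 and a vector ξ ∈ ℝ^N with ξ_i > 0 for all i such that (Qξ)_i = −c − β_i for every i ∈ S. -/
/-!
Since `πQ = 0` with `π ≠ 0`, the range of `Q` lies in the hyperplane `{w | π ⬝ w = 0}`; as `Q`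
has rank `N - 1` it is that hyperplane. Choosing `c = -(π ⬝ β) / Σ πᵢ` puts `-c𝟙 - β` in it, so
`Qξ₀ = -c𝟙 - β` for some `ξ₀`, and since `Q𝟙 = 0` we may add a large multiple of `𝟙` to `ξ₀`
to make it positive.
-/

open Matrix

namespace Matrix

theorem range_mulVecLin_eq_ker_dotProduct_of_vecMul_eq_zero {K m n : Type*} [Field K]
    [Fintype m] [DecidableEq m] [Fintype n] {A : Matrix m n K} {v : m → K}
    (hv : v ≠ 0) (hvA : v ᵥ* A = 0) (hrank : A.rank = Fintype.card m - 1) :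
    LinearMap.range A.mulVecLin = LinearMap.ker (dotProductEquiv K m v) := by
  have hle : LinearMap.range A.mulVecLin ≤ LinearMap.ker (dotProductEquiv K m v) := by
    rintro _ ⟨x, rfl⟩
    simp [dotProduct_mulVec, hvA]
  refine Submodule.eq_of_le_of_finrank_le hle ?_
  have hker := (dotProductEquiv K m v).finrank_ker_add_one_of_ne_zero
    ((dotProductEquiv K m).map_ne_zero_iff.mpr hv)
  rw [Module.finrank_fintype_fun_eq_card] at hker
  rw [← rank, hrank]
  omega

theorem exists_pos_mulVec_eq_of_mulVec_one_eq_zero {K m n : Type*}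
    [Field K] [LinearOrder K] [IsStrictOrderedRing K] [Fintype m] [Fintype n]
    {A : Matrix m n K} (hA : A *ᵥ 1 = 0) (x : n → K) :
    ∃ y : n → K, (∀ i, 0 < y i) ∧ A *ᵥ y = A *ᵥ x := by
  obtain ⟨t, ht⟩ := Finite.exists_le fun i => -x i
  refine ⟨x + (t + 1) • 1, fun i => ?_, by rw [mulVec_add, mulVec_smul, hA, smul_zero, add_zero]⟩
  have := ht i
  simp only [Pi.add_apply, Pi.smul_apply, Pi.one_apply, smul_eq_mul, mul_one]
  linarith

end Matrix

theorem fredholm_alternative_positive_solution_general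
    (N : ℕ)
    (Q : Matrix (Fin N) (Fin N) ℝ)
    (hQrow : ∀ i, ∑ j, Q i j = 0)
    (hrank : Q.rank = N - 1)
    (piv : Fin N → ℝ) (hpiv : ∀ i, 0 < piv i)
    (hpivQ : ∀ j, ∑ i, piv i * Q i j = 0)
    (β : Fin N → ℝ) (hβ : ∑ i, piv i * β i < 0) :
    ∃ c : ℝ, 0 < c ∧ ∃ ξ : Fin N → ℝ, (∀ i, 0 < ξ i) ∧
      ∀ i, Q.mulVec ξ i = -c - β i := by
  have hN : Nonempty (Fin N) := by
    by_contra h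
    simp [not_nonempty_iff.mp h] at hβ
  have hmass : 0 < ∑ i, piv i := Finset.sum_pos (fun i _ => hpiv i) Finset.univ_nonempty
  have hrange := range_mulVecLin_eq_ker_dotProduct_of_vecMul_eq_zero
    (A := Q) (v := piv) (fun h => (hpiv hN.some).ne' (congrFun h _))
    (funext hpivQ) (by rw [hrank, Fintype.card_fin])
  set c := -(∑ i, piv i * β i) / ∑ i, piv i
  have hc : 0 < c := div_pos (neg_pos.mpr hβ) hmass
  have htarget : (fun i => -c - β i) ∈ LinearMap.range Q.mulVecLin := by
    rw [hrange, LinearMap.mem_ker, dotProductEquiv_apply_apply]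
    simp only [dotProduct, mul_sub, mul_neg, Finset.sum_sub_distrib, Finset.sum_neg_distrib,
      ← Finset.sum_mul]
    rw [show (∑ i, piv i) * c = -∑ i, piv i * β i from mul_div_cancel₀ _ hmass.ne']
    ring
  obtain ⟨ξ₀, hξ₀⟩ := htarget
  have hQone : Q *ᵥ 1 = 0 := funext fun i => by simpa [mulVec, dotProduct] using hQrow i
  obtain ⟨ξ, hξpos, hξ⟩ := exists_pos_mulVec_eq_of_mulVec_one_eq_zero hQone ξ₀
  exact ⟨c, hc, ξ, hξpos, fun i => by rw [hξ]; exact congrFun hξ₀ i⟩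

/-- Fredholm alternative with a positive solution for conservative Q-matrices:
if `Q` is a conservative Q-matrix on `{1,…,N}` of rank `N − 1`, `π` is a strictly
positive row vector with `πQ = 0`, and `β` satisfies `Σ π_i β_i < 0`, then there
exist `c > 0` and a strictly positive vector `ξ` with `(Qξ)_i = −c − β_i` for all `i`. -/
theorem fredholm_alternative_positive_solution
    (N : ℕ) (hN : 2 ≤ N)
    (Q : Matrix (Fin N) (Fin N) ℝ)
    (hQoff : ∀ i j, i ≠ j → 0 ≤ Q i j)
    (hQrow : ∀ i, ∑ j, Q i j = 0)
    (hrank : Q.rank = N - 1)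
    (piv : Fin N → ℝ) (hpiv : ∀ i, 0 < piv i)
    (hpivQ : ∀ j, ∑ i, piv i * Q i j = 0)
    (β : Fin N → ℝ) (hβ : ∑ i, piv i * β i < 0) :
    ∃ c : ℝ, 0 < c ∧ ∃ ξ : Fin N → ℝ, (∀ i, 0 < ξ i) ∧
      ∀ i, Q.mulVec ξ i = -c - β i :=
  fredholm_alternative_positive_solution_general N Q hQrow hrank piv hpiv hpivQ β hβ
end

section
/- (Lyapunov inequality underlying Theorem 4.3, Case (L1)) Let D ⊆ ℝ^d be an open neighborhood of 0, let Q^{(1)} be a conservative Q-matrix on S, and suppose Q(x) = Q^{(1)} for every x with |x| < α1, where α1 > 0. Suppose ρ : D∖{0} → (0,∞) is twice continuously differentiable with ℒ^{(i)}ρ(x) ≤ β_i ρ(x) for all x ∈ D∖{0} and i ∈ S, where β ∈ ℝ^N. Suppose there exist p ∈ (0,1], η > 0 and ξ ∈ ℝ^N with ξ_i > 0 for all i such that (Q^{(1)} + p·diag(β))ξ = −η ξ. Then the function V(x,i) = ξ_i ρ(x)^p satisfies 𝒜V(x,i) ≤ −η V(x,i) < 0 for all x ∈ D with 0 < |x|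 < α1 and all i ∈ S. -/
open scoped BigOperators

/-- The diffusion generator `ℒ^{(i)}f(x) = ⟨b(x,i), ∇f(x)⟩ + (1/2) tr(a(x,i) ∇²f(x))`
in a fixed environment, expressed via Fréchet derivatives on Euclidean space. -/
noncomputable def diffGen {d : ℕ}
    (b : EuclideanSpace ℝ (Fin d) → EuclideanSpace ℝ (Fin d))
    (a : EuclideanSpace ℝ (Fin d) → Matrix (Fin d) (Fin d) ℝ)
    (f : EuclideanSpace ℝ (Fin d) → ℝ) (x : EuclideanSpace ℝ (Fin d)) : ℝ :=
  fderiv ℝ f x (b x) +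
    (1 / 2) * ∑ k, ∑ l, a x k l *
      fderiv ℝ (fun y => fderiv ℝ f y (EuclideanSpace.single l 1)) x
        (EuclideanSpace.single k 1)

/-- The full generator of the regime-switching diffusion:
`𝒜V(x,i) = ℒ^{(i)}V(·,i)(x) + Σ_{j≠i} q_{ij}(x)(V(x,j) − V(x,i))`. -/
noncomputable def hybridGen {N d : ℕ}
    (b : EuclideanSpace ℝ (Fin d) → Fin N → EuclideanSpace ℝ (Fin d))
    (a : EuclideanSpace ℝ (Fin d) → Fin N → Matrix (Fin d) (Fin d) ℝ)
    (Q : EuclideanSpace ℝ (Fin d) → Matrix (Fin N) (Fin N) ℝ)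
    (V : EuclideanSpace ℝ (Fin d) → Fin N → ℝ)
    (x : EuclideanSpace ℝ (Fin d)) (i : Fin N) : ℝ :=
  diffGen (fun y => b y i) (fun y => a y i) (fun y => V y i) x +
    ∑ j ∈ Finset.univ.erase i, Q x i j * (V x j - V x i)

/-!
By Itô's formula, `ℒ⁽ⁱ⁾(ρ^p) = p ρ^(p-1) ℒ⁽ⁱ⁾ρ + ½ p (p-1) ρ^(p-2) ⟨∇ρ, a ∇ρ⟩`; for `p ≤ 1` and
`a ⪰ 0` the second term is nonpositive, so `ℒ⁽ⁱ⁾(ξᵢ ρ^p) ≤ p βᵢ ξᵢ ρ^p`. Near `0` the switching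
part of `𝒜V` is `(Q⁽¹⁾ξ)ᵢ ρ^p` because `Q(x) = Q⁽¹⁾` has zero row sums, and the eigen-equation
`(Q⁽¹⁾ + p diag β) ξ = -η ξ` turns the sum into `-η ξᵢ ρ^p`.
-/

open Filter Topology Matrix

theorem Matrix.dotProduct_mulVec_eq_sum_sum {n R : Type*} [Fintype n] [CommSemiring R]
    (A : Matrix n n R) (v : n → R) :
    v ⬝ᵥ (A *ᵥ v) = ∑ k, ∑ l, A k l * v k * v l := by
  simp only [dotProduct, mulVec, Finset.mul_sum]
  exact Finset.sum_congr rfl fun k _ => Finset.sum_congr rfl fun l _ => by ring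

theorem Matrix.sum_erase_mul_sub_eq_mulVec {n R : Type*} [Fintype n] [DecidableEq n]
    [CommRing R] {Q : Matrix n n R} {i : n} (hQ : ∑ j, Q i j = 0) (ξ : n → R) :
    ∑ j ∈ Finset.univ.erase i, Q i j * (ξ j - ξ i) = (Q *ᵥ ξ) i := by
  rw [Finset.sum_erase _ (by simp)]
  simp only [mul_sub, Finset.sum_sub_distrib, ← Finset.sum_mul, hQ, zero_mul, sub_zero,
    mulVec, dotProduct]

section Generator

variable {d : ℕ} {b : EuclideanSpace ℝ (Fin d) → EuclideanSpace ℝ (Fin d)}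
  {a : EuclideanSpace ℝ (Fin d) → Matrix (Fin d) (Fin d) ℝ}
  {f : EuclideanSpace ℝ (Fin d) → ℝ} {φ φ' : ℝ → ℝ} {φ'' : ℝ} {x : EuclideanSpace ℝ (Fin d)}

theorem fderiv_comp_eventuallyEq (hf : ∀ᶠ y in 𝓝 x, DifferentiableAt ℝ f y)
    (hfc : ContinuousAt f x) (hφ : ∀ᶠ t in 𝓝 (f x), HasDerivAt φ (φ' t) t) :
    fderiv ℝ (fun y => φ (f y)) =ᶠ[𝓝 x] fun y => φ' (f y) • fderiv ℝ f y := by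
  filter_upwards [hf, hfc.eventually hφ] with y hfy hφy
  exact (hφy.comp_hasFDerivAt y hfy.hasFDerivAt).fderiv

theorem fderiv_fderiv_comp_apply (hf : ContDiffAt ℝ 2 f x)
    (hφ : ∀ᶠ t in 𝓝 (f x), HasDerivAt φ (φ' t) t) (hφ' : HasDerivAt φ' φ'' (f x))
    (k l : Fin d) :
    fderiv ℝ (fun y => fderiv ℝ (fun z => φ (f z)) y (EuclideanSpace.single l 1)) x
        (EuclideanSpace.single k 1) =
      φ' (f x) * fderiv ℝ (fun y => fderiv ℝ f y (EuclideanSpace.single l 1)) x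
          (EuclideanSpace.single k 1) +
        φ'' * fderiv ℝ f x (EuclideanSpace.single k 1) *
          fderiv ℝ f x (EuclideanSpace.single l 1) := by
  have hf1 : ∀ᶠ y in 𝓝 x, DifferentiableAt ℝ f y :=
    (hf.eventually (by simp)).mono fun y hy => hy.differentiableAt (by norm_num)
  have hfx : HasFDerivAt f (fderiv ℝ f x) x := hf1.self_of_nhds.hasFDerivAt
  have hpartial : DifferentiableAt ℝ (fun y => fderiv ℝ f y (EuclideanSpace.single l 1)) x :=
    ((hf.fderiv_right (m := 1) (by norm_num)).differentiableAt one_ne_zero).clm_apply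
      (differentiableAt_const _)
  have heq : (fun y => fderiv ℝ (fun z => φ (f z)) y (EuclideanSpace.single l 1)) =ᶠ[𝓝 x]
      fun y => φ' (f y) * fderiv ℝ f y (EuclideanSpace.single l 1) := by
    filter_upwards [fderiv_comp_eventuallyEq hf1 hfx.continuousAt hφ] with y hy
    simp [hy]
  have hprod : HasFDerivAt (fun y => φ' (f y) * fderiv ℝ f y (EuclideanSpace.single l 1))
      (φ' (f x) • fderiv ℝ (fun y => fderiv ℝ f y (EuclideanSpace.single l 1)) x +
        fderiv ℝ f x (EuclideanSpace.single l 1) • φ'' • fderiv ℝ f x) x :=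
    (hφ'.comp_hasFDerivAt x hfx).mul hpartial.hasFDerivAt
  rw [heq.fderiv_eq, hprod.fderiv]
  simp only [_root_.add_apply, _root_.smul_apply, smul_eq_mul]
  ring

theorem diffGen_comp (hf : ContDiffAt ℝ 2 f x)
    (hφ : ∀ᶠ t in 𝓝 (f x), HasDerivAt φ (φ' t) t) (hφ' : HasDerivAt φ' φ'' (f x)) :
    diffGen b a (fun y => φ (f y)) x =
      φ' (f x) * diffGen b a f x +
        1 / 2 * φ'' * ((fun k => fderiv ℝ f x (EuclideanSpace.single k 1)) ⬝ᵥ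
          (a x *ᵥ fun k => fderiv ℝ f x (EuclideanSpace.single k 1))) := by
  have hf1 : ∀ᶠ y in 𝓝 x, DifferentiableAt ℝ f y :=
    (hf.eventually (by simp)).mono fun y hy => hy.differentiableAt (by norm_num)
  have hfirst := (fderiv_comp_eventuallyEq hf1 hf.continuousAt hφ).self_of_nhds
  simp only [diffGen, hfirst, fderiv_fderiv_comp_apply hf hφ hφ', Matrix.dotProduct_mulVec_eq_sum_sum,
    _root_.smul_apply, smul_eq_mul, mul_add, Finset.sum_add_distrib, Finset.mul_sum]
  rw [← add_assoc]
  congr 1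
  · congr 1
    exact Finset.sum_congr rfl fun k _ => Finset.sum_congr rfl fun l _ => by ring
  · exact Finset.sum_congr rfl fun k _ => Finset.sum_congr rfl fun l _ => by ring

theorem diffGen_const_mul_rpow_le (ha : (a x).PosSemidef) (hf : ContDiffAt ℝ 2 f x)
    (hfx : 0 < f x) {c p : ℝ} (hc : 0 ≤ c) (hp0 : 0 ≤ p) (hp1 : p ≤ 1) :
    diffGen b a (fun y => c * f y ^ p) x ≤ c * p * f x ^ (p - 1) * diffGen b a f x := by
  have hφ : ∀ᶠ t in 𝓝 (f x), HasDerivAt (fun t => c * t ^ p) (c * (p * t ^ (p - 1))) t := by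
    filter_upwards [eventually_gt_nhds hfx] with t ht
    exact (Real.hasDerivAt_rpow_const (Or.inl ht.ne')).const_mul c
  have hφ' : HasDerivAt (fun t => c * (p * t ^ (p - 1)))
      (c * (p * ((p - 1) * f x ^ (p - 1 - 1)))) (f x) :=
    ((Real.hasDerivAt_rpow_const (Or.inl hfx.ne')).const_mul p).const_mul c
  rw [diffGen_comp hf hφ hφ']
  have hquad := ha.dotProduct_mulVec_nonneg fun k => fderiv ℝ f x (EuclideanSpace.single k 1)
  have hconcave : c * (p * ((p - 1) * f x ^ (p - 1 - 1))) ≤ 0 :=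
    mul_nonpos_of_nonneg_of_nonpos hc <| mul_nonpos_of_nonneg_of_nonpos hp0 <|
      mul_nonpos_of_nonpos_of_nonneg (by linarith) (by positivity)
  simp only [star_trivial] at hquad
  nlinarith [mul_nonpos_of_nonpos_of_nonneg hconcave hquad]

end Generator

theorem hybridGen_mul_left_eq {N d : ℕ}
    {b : EuclideanSpace ℝ (Fin d) → Fin N → EuclideanSpace ℝ (Fin d)}
    {a : EuclideanSpace ℝ (Fin d) → Fin N → Matrix (Fin d) (Fin d) ℝ}
    {Q : EuclideanSpace ℝ (Fin d) → Matrix (Fin N) (Fin N) ℝ} {x : EuclideanSpace ℝ (Fin d)}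
    {i : Fin N} (hQ : ∑ j, Q x i j = 0) (ξ : Fin N → ℝ) (g : EuclideanSpace ℝ (Fin d) → ℝ) :
    hybridGen b a Q (fun y j => ξ j * g y) x i =
      diffGen (fun y => b y i) (fun y => a y i) (fun y => ξ i * g y) x + (Q x *ᵥ ξ) i * g x := by
  rw [hybridGen, ← Matrix.sum_erase_mul_sub_eq_mulVec hQ, Finset.sum_mul]
  congr 1
  exact Finset.sum_congr rfl fun j _ => by ring

theorem lyapunov_stability_L1_general
    (N d : ℕ)
    (b : EuclideanSpace ℝ (Fin d) → Fin N → EuclideanSpace ℝ (Fin d))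
    (a : EuclideanSpace ℝ (Fin d) → Fin N → Matrix (Fin d) (Fin d) ℝ)
    (ha : ∀ x i, (a x i).PosSemidef)
    (Q : EuclideanSpace ℝ (Fin d) → Matrix (Fin N) (Fin N) ℝ)
    (hQrow : ∀ x i, ∑ j, Q x i j = 0)
    (D : Set (EuclideanSpace ℝ (Fin d))) (hD : IsOpen D)
    (Q1 : Matrix (Fin N) (Fin N) ℝ)
    (α1 : ℝ)
    (hQeq : ∀ x : EuclideanSpace ℝ (Fin d), ‖x‖ < α1 → Q x = Q1)
    (ρ : EuclideanSpace ℝ (Fin d) → ℝ)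
    (hρpos : ∀ x ∈ D \ {0}, 0 < ρ x)
    (hρC2 : ContDiffOn ℝ 2 ρ (D \ {0}))
    (β : Fin N → ℝ)
    (hL : ∀ x ∈ D \ {0}, ∀ i, diffGen (fun y => b y i) (fun y => a y i) ρ x ≤ β i * ρ x)
    (p : ℝ) (hp0 : 0 < p) (hp1 : p ≤ 1)
    (η : ℝ) (hη : 0 < η)
    (ξ : Fin N → ℝ) (hξ : ∀ i, 0 < ξ i)
    (heig : ∀ i, (Q1 + p • Matrix.diagonal β).mulVec ξ i = -η * ξ i) :
    ∀ x ∈ D, x ≠ 0 → ‖x‖ < α1 → ∀ i,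
      hybridGen b a Q (fun y j => ξ j * ρ y ^ p) x i ≤ -η * (ξ i * ρ x ^ p) ∧
      -η * (ξ i * ρ x ^ p) < 0 := by
  intro x hxD hx0 hxα i
  have hx : x ∈ D \ {0} := ⟨hxD, hx0⟩
  have hρx : 0 < ρ x := hρpos x hx
  have hρC2x : ContDiffAt ℝ 2 ρ x :=
    hρC2.contDiffAt ((hD.sdiff isClosed_singleton).mem_nhds hx)
  have hV : 0 < ξ i * ρ x ^ p := mul_pos (hξ i) (Real.rpow_pos_of_pos hρx p)
  have hdiffusion : diffGen (fun y => b y i) (fun y => a y i) (fun y => ξ i * ρ y ^ p) x ≤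
      p * β i * (ξ i * ρ x ^ p) :=
    calc _ ≤ ξ i * p * ρ x ^ (p - 1) * diffGen (fun y => b y i) (fun y => a y i) ρ x :=
          diffGen_const_mul_rpow_le (ha x i) hρC2x hρx (hξ i).le hp0.le hp1
      _ ≤ ξ i * p * ρ x ^ (p - 1) * (β i * ρ x) :=
          mul_le_mul_of_nonneg_left (hL x hx i)
            (mul_pos (mul_pos (hξ i) hp0) (Real.rpow_pos_of_pos hρx _)).le
      _ = p * β i * (ξ i * ρ x ^ p) := by
          rw [Real.rpow_sub_one hρx.ne']
          field_simp
  have hswitching : (Q1 *ᵥ ξ) i = -η * ξ i - p * β i * ξ i := by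
    have := heig i
    simp only [add_mulVec, smul_mulVec, Pi.add_apply, Pi.smul_apply, mulVec_diagonal,
      smul_eq_mul] at this
    linarith
  rw [hybridGen_mul_left_eq (hQrow x i), hQeq x hxα, hswitching]
  exact ⟨by linarith, mul_neg_of_neg_of_pos (neg_lt_zero.mpr hη) hV⟩

/-- (Lyapunov inequality underlying Theorem 4.3, Case (L1)): with
`Q(x) = Q^{(1)}` near `0`, `ℒ^{(i)}ρ ≤ β_i ρ` on `D∖{0}`, and
`(Q^{(1)} + p·diag β)ξ = −η ξ` with `ξ ≫ 0`, `p ∈ (0,1]`, `η > 0`, the function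
`V(x,i) = ξ_i ρ(x)^p` satisfies `𝒜V(x,i) ≤ −η V(x,i) < 0` for `0 < |x| < α1`, `x ∈ D`. -/
theorem lyapunov_stability_L1
    (N d : ℕ) (hN : 1 ≤ N) (hd : 1 ≤ d)
    (b : EuclideanSpace ℝ (Fin d) → Fin N → EuclideanSpace ℝ (Fin d))
    (a : EuclideanSpace ℝ (Fin d) → Fin N → Matrix (Fin d) (Fin d) ℝ)
    (ha : ∀ x i, (a x i).PosSemidef)
    (Q : EuclideanSpace ℝ (Fin d) → Matrix (Fin N) (Fin N) ℝ)
    (hQoff : ∀ x i j, i ≠ j → 0 ≤ Q x i j)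
    (hQrow : ∀ x i, ∑ j, Q x i j = 0)
    (D : Set (EuclideanSpace ℝ (Fin d))) (hD : IsOpen D) (h0D : (0 : EuclideanSpace ℝ (Fin d)) ∈ D)
    (Q1 : Matrix (Fin N) (Fin N) ℝ)
    (hQ1off : ∀ i j, i ≠ j → 0 ≤ Q1 i j)
    (hQ1row : ∀ i, ∑ j, Q1 i j = 0)
    (α1 : ℝ) (hα1 : 0 < α1)
    (hQeq : ∀ x : EuclideanSpace ℝ (Fin d), ‖x‖ < α1 → Q x = Q1)
    (ρ : EuclideanSpace ℝ (Fin d) → ℝ)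
    (hρpos : ∀ x ∈ D \ {0}, 0 < ρ x)
    (hρC2 : ContDiffOn ℝ 2 ρ (D \ {0}))
    (β : Fin N → ℝ)
    (hL : ∀ x ∈ D \ {0}, ∀ i, diffGen (fun y => b y i) (fun y => a y i) ρ x ≤ β i * ρ x)
    (p : ℝ) (hp0 : 0 < p) (hp1 : p ≤ 1)
    (η : ℝ) (hη : 0 < η)
    (ξ : Fin N → ℝ) (hξ : ∀ i, 0 < ξ i)
    (heig : ∀ i, (Q1 + p • Matrix.diagonal β).mulVec ξ i = -η * ξ i) :
    ∀ x ∈ D, x ≠ 0 → ‖x‖ < α1 → ∀ i,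
      hybridGen b a Q (fun y j => ξ j * ρ y ^ p) x i ≤ -η * (ξ i * ρ x ^ p) ∧
      -η * (ξ i * ρ x ^ p) < 0 :=
  lyapunov_stability_L1_general N d b a ha Q hQrow D hD Q1 α1 hQeq ρ hρpos hρC2 β hL p hp0 hp1 η hη
    ξ hξ heig
end
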